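/- For h(x) = (x+1)(1+1/x)^x and H(x) = h(x) - h(x-1), the limit of H(x) as x → ∞ equals e. -/

import Mathlib

open Real Filter Topology

noncomputable def h (x : ℝ) : ℝ := (x + 1) * (1 + 1 / x) ^ x

/-!
By the mean value theorem `h x - h (x - 1) = h' c` for some `c ∈ (x - 1, x)`, so it suffices that
`h' x = (1 + 1/x)^x · (x + 1) log (1 + 1/x)` tends to `e`: the first factor tends to `e` and the
second to `1`, since `x log (1 + 1/x) → 1` and `log (1 + 1/x) → 0`.
-/

theorem tendsto_sub_comp_sub_one_of_hasDerivAt {f f' : ℝ → ℝ} {a L : ℝ}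
    (hf : ∀ x, a < x → HasDerivAt f (f' x) x) (hf' : Tendsto f' atTop (𝓝 L)) :
    Tendsto (fun x => f x - f (x - 1)) atTop (𝓝 L) := by
  have mvt : ∀ x, a + 1 < x → ∃ c ∈ Set.Ioo (x - 1) x, f' c = f x - f (x - 1) := by
    intro x hx
    have hderiv : ∀ t ∈ Set.Ioo (x - 1) x, HasDerivAt f (f' t) t :=
      fun t ht => hf t (by linarith [ht.1])
    have hcont : ContinuousOn f (Set.Icc (x - 1) x) :=
      fun t ht => (hf t (by linarith [ht.1])).continuousAt.continuousWithinAt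
    obtain ⟨c, hc, hfc⟩ := exists_hasDerivAt_eq_slope f f' (sub_one_lt x) hcont hderiv
    exact ⟨c, hc, by rwa [sub_sub_cancel, div_one] at hfc⟩
  choose! c hc hfc using mvt
  have hc_atTop : Tendsto c atTop atTop :=
    tendsto_atTop_mono' _ ((eventually_gt_atTop (a + 1)).mono fun x hx => (hc x hx).1.le)
      (tendsto_atTop_add_const_right _ (-1) tendsto_id)
  exact (hf'.comp hc_atTop).congr' ((eventually_gt_atTop (a + 1)).mono hfc)

theorem hasDerivAt_h {x : ℝ} (hx : 0 < x) :
    HasDerivAt h ((1 + 1 / x) ^ x * ((x + 1) * log (1 + 1 / x))) x := by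
  have hb : 0 < 1 + 1 / x := by positivity
  have hbase : HasDerivAt (fun y : ℝ => 1 + 1 / y) (-(x ^ 2)⁻¹) x := by
    simpa [one_div] using (hasDerivAt_inv hx.ne').const_add 1
  refine (((hasDerivAt_id x).add_const 1).mul (hbase.rpow (hasDerivAt_id x) hb)).congr_deriv ?_
  rw [id, rpow_sub hb, rpow_one]
  field_simp
  ring

theorem tendsto_add_one_mul_log_one_add_one_div :
    Tendsto (fun x : ℝ => (x + 1) * log (1 + 1 / x)) atTop (𝓝 1) := by
  have hlog : Tendsto (fun x : ℝ => log (1 + 1 / x)) atTop (𝓝 0) := by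
    have hbase : Tendsto (fun x : ℝ => 1 + 1 / x) atTop (𝓝 1) := by
      simpa [one_div] using tendsto_inv_atTop_zero.const_add (1 : ℝ)
    simpa using hbase.log one_ne_zero
  simpa [add_mul] using (tendsto_mul_log_one_add_div_atTop 1).add hlog

theorem H_tendsto :
    Tendsto (fun x : ℝ => h x - h (x - 1)) atTop (nhds (Real.exp 1)) := by
  refine tendsto_sub_comp_sub_one_of_hasDerivAt (fun x hx => hasDerivAt_h hx) ?_
  simpa using (tendsto_one_add_div_rpow_exp 1).mul tendsto_add_one_mul_log_one_add_one_div
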